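/- arXiv:1704.08155 — 2 statements merged into one kernel-verified Lean document; each statement's English description precedes it below -/
import Mathlib

section
/- The truth predicate 𝕋 satisfies Tarski's semantic clauses: for all Σ sentences with parameters φ and ψ, all Σ formulas φ(x) with one free variable, and all sets a, b: (1) 𝕋(φ ∧ ψ) ⟺ 𝕋(φ) ∧ 𝕋(ψ); (2) 𝕋(φ ∨ ψ) ⟺ 𝕋(φ) ∨ 𝕋(ψ); (3) 𝕋(∃x φ(x)) ⟺ there exists a set a with 𝕋(φ(a̲)); (4) 𝕋(∀x ∈ b̲ φ(x)) ⟺ for every a ∈ b, 𝕋(φ(a̲)); (5) 𝕋(a̲ ∈ b̲) ⟺ a ∈ b, 𝕋(a̲ ∉ b̲) ⟺ a ∉ b, 𝕋(a̲ = b̲) ⟺ a = b, and 𝕋(a̲ ≠ b̲) ⟺ a ≠ b. -/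
/-!
Core development: finitary Σ formulas over the vocabulary `=, ≠, ∈, ∉`
(no function symbols) with parameters from the universe of sets (`ZFSet`),
verifications, and the truth predicate 𝕋.
-/

/-- Terms: variables (numbered) or parameter symbols naming sets. -/
inductive STerm : Type 1
  | var : ℕ → STerm
  | param : ZFSet → STerm

/-- Σ formulas over `=, ≠, ∈, ∉` with parameters: built from atomic formulas
and `⊤`, `⊥` using binary `∧`, binary `∨`, bounded universal quantification
`∀ x ∈ t`, and unbounded existential quantification `∃ x`. -/
inductive SForm : Type 1
  | tru : SForm
  | fls : SForm
  | eq : STerm → STerm → SForm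
  | ne : STerm → STerm → SForm
  | mem : STerm → STerm → SForm
  | nmem : STerm → STerm → SForm
  | and : SForm → SForm → SForm
  | or : SForm → SForm → SForm
  | ball : ℕ → STerm → SForm → SForm
  | ex : ℕ → SForm → SForm

namespace Positivistic

/-- Free variables of a term. -/
def tfree : STerm → Set ℕ
  | .var n => {n}
  | .param _ => ∅

/-- Free variables of a Σ formula. -/
def free : SForm → Set ℕ
  | .tru => ∅
  | .fls => ∅
  | .eq s t => tfree s ∪ tfree t
  | .ne s t => tfree s ∪ tfree t
  | .mem s t => tfree s ∪ tfree t
  | .nmem s t => tfree s ∪ tfree t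
  | .and φ ψ => free φ ∪ free ψ
  | .or φ ψ => free φ ∪ free ψ
  | .ball x t φ => tfree t ∪ (free φ \ {x})
  | .ex x φ => free φ \ {x}

/-- A Σ sentence with parameters: no free variables. -/
def IsSentence (φ : SForm) : Prop := free φ = ∅

/-- Substitution of a term for a variable in a term. -/
def tsubst (x : ℕ) (t : STerm) : STerm → STerm
  | .var n => if n = x then t else .var n
  | .param a => .param a

/-- Substitution of a term for the free occurrences of a variable in a formula. -/
def subst (x : ℕ) (t : STerm) : SForm → SForm
  | .tru => .tru
  | .fls => .fls
  | .eq s u => .eq (tsubst x t s) (tsubst x t u)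
  | .ne s u => .ne (tsubst x t s) (tsubst x t u)
  | .mem s u => .mem (tsubst x t s) (tsubst x t u)
  | .nmem s u => .nmem (tsubst x t s) (tsubst x t u)
  | .and φ ψ => .and (subst x t φ) (subst x t ψ)
  | .or φ ψ => .or (subst x t φ) (subst x t ψ)
  | .ball y s φ => .ball y (tsubst x t s) (if y = x then φ else subst x t φ)
  | .ex y φ => .ex y (if y = x then φ else subst x t φ)

/-- Simultaneous substitution of terms for all free variables. -/
def tsubstAll (σ : ℕ → STerm) : STerm → STerm
  | .var n => σ n
  | .param a => .param a

/-- Simultaneous substitution of terms for all free variables of a formula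
(the substituted terms may contain variables that become bound, i.e. capture
is permitted, as in deep inference). -/
def substAll (σ : ℕ → STerm) : SForm → SForm
  | .tru => .tru
  | .fls => .fls
  | .eq s u => .eq (tsubstAll σ s) (tsubstAll σ u)
  | .ne s u => .ne (tsubstAll σ s) (tsubstAll σ u)
  | .mem s u => .mem (tsubstAll σ s) (tsubstAll σ u)
  | .nmem s u => .nmem (tsubstAll σ s) (tsubstAll σ u)
  | .and φ ψ => .and (substAll σ φ) (substAll σ ψ)
  | .or φ ψ => .or (substAll σ φ) (substAll σ ψ)
  | .ball y s φ => .ball y (tsubstAll σ s) (substAll (Function.update σ y (.var y)) φ)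
  | .ex y φ => .ex y (substAll (Function.update σ y (.var y)) φ)

/-- Substituting parameters for all free variables of a formula. -/
def paramSubst (σ : ℕ → ZFSet) (φ : SForm) : SForm :=
  substAll (fun n => .param (σ n)) φ

/-- A verification: a set of Σ sentences with parameters closed under the
canonical decomposition clauses, whose atomic members are true. -/
structure IsVerification (V : Set SForm) : Prop where
  and_mem : ∀ φ ψ : SForm, SForm.and φ ψ ∈ V → φ ∈ V ∧ ψ ∈ V
  or_mem : ∀ φ ψ : SForm, SForm.or φ ψ ∈ V → φ ∈ V ∨ ψ ∈ V
  ex_mem : ∀ (x : ℕ) (φ : SForm), SForm.ex x φ ∈ V →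
    ∃ a : ZFSet, subst x (.param a) φ ∈ V
  ball_mem : ∀ (x : ℕ) (b : ZFSet) (φ : SForm), SForm.ball x (.param b) φ ∈ V →
    ∀ a : ZFSet, a ∈ b → subst x (.param a) φ ∈ V
  mem_true : ∀ a b : ZFSet, SForm.mem (.param a) (.param b) ∈ V → a ∈ b
  nmem_true : ∀ a b : ZFSet, SForm.nmem (.param a) (.param b) ∈ V → a ∉ b
  eq_true : ∀ a b : ZFSet, SForm.eq (.param a) (.param b) ∈ V → a = b
  ne_true : ∀ a b : ZFSet, SForm.ne (.param a) (.param b) ∈ V → a ≠ b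

/-- The truth predicate 𝕋: a Σ sentence with parameters is true iff it has a
verification. -/
def STrue (φ : SForm) : Prop := ∃ V : Set SForm, IsVerification V ∧ φ ∈ V

end Positivistic

namespace Positivistic

/-- The union of a family of verifications is a verification. -/
lemma isVerification_iUnion {ι : Sort*} {V : ι → Set SForm}
    (h : ∀ i, IsVerification (V i)) : IsVerification (⋃ i, V i) := by
  constructor
  · rintro φ ψ hm
    obtain ⟨i, hi⟩ := Set.mem_iUnion.1 hm
    obtain ⟨h1, h2⟩ := (h i).and_mem φ ψ hi
    exact ⟨Set.mem_iUnion.2 ⟨i, h1⟩, Set.mem_iUnion.2 ⟨i, h2⟩⟩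
  · rintro φ ψ hm
    obtain ⟨i, hi⟩ := Set.mem_iUnion.1 hm
    rcases (h i).or_mem φ ψ hi with h1 | h1
    · exact Or.inl (Set.mem_iUnion.2 ⟨i, h1⟩)
    · exact Or.inr (Set.mem_iUnion.2 ⟨i, h1⟩)
  · rintro x φ hm
    obtain ⟨i, hi⟩ := Set.mem_iUnion.1 hm
    obtain ⟨a, ha⟩ := (h i).ex_mem x φ hi
    exact ⟨a, Set.mem_iUnion.2 ⟨i, ha⟩⟩
  · rintro x b φ hm a hab
    obtain ⟨i, hi⟩ := Set.mem_iUnion.1 hm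
    exact Set.mem_iUnion.2 ⟨i, (h i).ball_mem x b φ hi a hab⟩
  · rintro a b hm
    obtain ⟨i, hi⟩ := Set.mem_iUnion.1 hm
    exact (h i).mem_true a b hi
  · rintro a b hm
    obtain ⟨i, hi⟩ := Set.mem_iUnion.1 hm
    exact (h i).nmem_true a b hi
  · rintro a b hm
    obtain ⟨i, hi⟩ := Set.mem_iUnion.1 hm
    exact (h i).eq_true a b hi
  · rintro a b hm
    obtain ⟨i, hi⟩ := Set.mem_iUnion.1 hm
    exact (h i).ne_true a b hi

/-- The truth predicate 𝕋 satisfies Tarski's semantic clauses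
for conjunction, disjunction, unbounded existential quantification, bounded
universal quantification, and the atomic predicates. -/
theorem truth_satisfies_tarski_clauses :
    (∀ φ ψ : SForm, IsSentence φ → IsSentence ψ →
      (STrue (.and φ ψ) ↔ STrue φ ∧ STrue ψ)) ∧
    (∀ φ ψ : SForm, IsSentence φ → IsSentence ψ →
      (STrue (.or φ ψ) ↔ STrue φ ∨ STrue ψ)) ∧
    (∀ (x : ℕ) (φ : SForm), free φ ⊆ {x} →
      (STrue (.ex x φ) ↔ ∃ a : ZFSet, STrue (subst x (.param a) φ))) ∧
    (∀ (x : ℕ) (b : ZFSet) (φ : SForm), free φ ⊆ {x} →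
      (STrue (.ball x (.param b) φ) ↔ ∀ a ∈ b, STrue (subst x (.param a) φ))) ∧
    (∀ a b : ZFSet,
      (STrue (.mem (.param a) (.param b)) ↔ a ∈ b) ∧
      (STrue (.nmem (.param a) (.param b)) ↔ a ∉ b) ∧
      (STrue (.eq (.param a) (.param b)) ↔ a = b) ∧
      (STrue (.ne (.param a) (.param b)) ↔ a ≠ b)) := by
  classical
  refine ⟨?_, ?_, ?_, ?_, ?_⟩
  · -- and
    intro φ ψ _ _
    constructor
    · rintro ⟨V, hV, hm⟩
      obtain ⟨h1, h2⟩ := hV.and_mem φ ψ hm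
      exact ⟨⟨V, hV, h1⟩, ⟨V, hV, h2⟩⟩
    · rintro ⟨⟨V1, hV1, h1⟩, ⟨V2, hV2, h2⟩⟩
      refine ⟨insert (SForm.and φ ψ) (V1 ∪ V2), ?_, Set.mem_insert _ _⟩
      constructor
      · rintro α β (h | h | h)
        · obtain ⟨rfl, rfl⟩ := SForm.and.inj h
          exact ⟨Or.inr (Or.inl h1), Or.inr (Or.inr h2)⟩
        · obtain ⟨ha, hb⟩ := hV1.and_mem α β h
          exact ⟨Or.inr (Or.inl ha), Or.inr (Or.inl hb)⟩
        · obtain ⟨ha, hb⟩ := hV2.and_mem α β h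
          exact ⟨Or.inr (Or.inr ha), Or.inr (Or.inr hb)⟩
      · rintro α β (h | h | h)
        · exact absurd h (by simp)
        · rcases hV1.or_mem α β h with h' | h'
          · exact Or.inl (Or.inr (Or.inl h'))
          · exact Or.inr (Or.inr (Or.inl h'))
        · rcases hV2.or_mem α β h with h' | h'
          · exact Or.inl (Or.inr (Or.inr h'))
          · exact Or.inr (Or.inr (Or.inr h'))
      · rintro x α (h | h | h)
        · exact absurd h (by simp)
        · obtain ⟨a, ha⟩ := hV1.ex_mem x α h
          exact ⟨a, Or.inr (Or.inl ha)⟩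
        · obtain ⟨a, ha⟩ := hV2.ex_mem x α h
          exact ⟨a, Or.inr (Or.inr ha)⟩
      · rintro x b α (h | h | h) a hab
        · exact absurd h (by simp)
        · exact Or.inr (Or.inl (hV1.ball_mem x b α h a hab))
        · exact Or.inr (Or.inr (hV2.ball_mem x b α h a hab))
      · rintro a b (h | h | h)
        · exact absurd h (by simp)
        · exact hV1.mem_true a b h
        · exact hV2.mem_true a b h
      · rintro a b (h | h | h)
        · exact absurd h (by simp)
        · exact hV1.nmem_true a b h
        · exact hV2.nmem_true a b h
      · rintro a b (h | h | h)
        · exact absurd h (by simp)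
        · exact hV1.eq_true a b h
        · exact hV2.eq_true a b h
      · rintro a b (h | h | h)
        · exact absurd h (by simp)
        · exact hV1.ne_true a b h
        · exact hV2.ne_true a b h
  · -- or
    intro φ ψ _ _
    constructor
    · rintro ⟨V, hV, hm⟩
      rcases hV.or_mem φ ψ hm with h | h
      · exact Or.inl ⟨V, hV, h⟩
      · exact Or.inr ⟨V, hV, h⟩
    · rintro (⟨V, hV, h1⟩ | ⟨V, hV, h1⟩) <;>
      · refine ⟨insert (SForm.or φ ψ) V, ?_, Set.mem_insert _ _⟩
        constructor
        · rintro α β (h | h)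
          · exact absurd h (by simp)
          · obtain ⟨ha, hb⟩ := hV.and_mem α β h
            exact ⟨Or.inr ha, Or.inr hb⟩
        · rintro α β (h | h)
          · obtain ⟨rfl, rfl⟩ := SForm.or.inj h
            first
              | exact Or.inl (Or.inr h1)
              | exact Or.inr (Or.inr h1)
          · rcases hV.or_mem α β h with h' | h'
            · exact Or.inl (Or.inr h')
            · exact Or.inr (Or.inr h')
        · rintro x α (h | h)
          · exact absurd h (by simp)
          · obtain ⟨a, ha⟩ := hV.ex_mem x α h
            exact ⟨a, Or.inr ha⟩
        · rintro x b α (h | h) a hab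
          · exact absurd h (by simp)
          · exact Or.inr (hV.ball_mem x b α h a hab)
        · rintro a b (h | h)
          · exact absurd h (by simp)
          · exact hV.mem_true a b h
        · rintro a b (h | h)
          · exact absurd h (by simp)
          · exact hV.nmem_true a b h
        · rintro a b (h | h)
          · exact absurd h (by simp)
          · exact hV.eq_true a b h
        · rintro a b (h | h)
          · exact absurd h (by simp)
          · exact hV.ne_true a b h
  · -- ex
    intro x φ _
    constructor
    · rintro ⟨V, hV, hm⟩
      obtain ⟨a, ha⟩ := hV.ex_mem x φ hm
      exact ⟨a, V, hV, ha⟩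
    · rintro ⟨a, V, hV, h1⟩
      refine ⟨insert (SForm.ex x φ) V, ?_, Set.mem_insert _ _⟩
      constructor
      · rintro α β (h | h)
        · exact absurd h (by simp)
        · obtain ⟨ha, hb⟩ := hV.and_mem α β h
          exact ⟨Or.inr ha, Or.inr hb⟩
      · rintro α β (h | h)
        · exact absurd h (by simp)
        · rcases hV.or_mem α β h with h' | h'
          · exact Or.inl (Or.inr h')
          · exact Or.inr (Or.inr h')
      · rintro y α (h | h)
        · obtain ⟨rfl, rfl⟩ := SForm.ex.inj h
          exact ⟨a, Or.inr h1⟩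
        · obtain ⟨c, hc⟩ := hV.ex_mem y α h
          exact ⟨c, Or.inr hc⟩
      · rintro y b α (h | h) c hcb
        · exact absurd h (by simp)
        · exact Or.inr (hV.ball_mem y b α h c hcb)
      · rintro a b (h | h)
        · exact absurd h (by simp)
        · exact hV.mem_true a b h
      · rintro a b (h | h)
        · exact absurd h (by simp)
        · exact hV.nmem_true a b h
      · rintro a b (h | h)
        · exact absurd h (by simp)
        · exact hV.eq_true a b h
      · rintro a b (h | h)
        · exact absurd h (by simp)
        · exact hV.ne_true a b h
  · -- ball
    intro x b φ _
    constructor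
    · rintro ⟨V, hV, hm⟩ a hab
      exact ⟨V, hV, hV.ball_mem x b φ hm a hab⟩
    · intro hall
      choose V hVver hVmem using fun (p : {a : ZFSet // a ∈ b}) => hall p.1 p.2
      set W : Set SForm := ⋃ p, V p with hW
      have hWver : IsVerification W := isVerification_iUnion hVver
      refine ⟨insert (SForm.ball x (.param b) φ) W, ?_, Set.mem_insert _ _⟩
      constructor
      · rintro α β (h | h)
        · exact absurd h (by simp)
        · obtain ⟨ha, hb⟩ := hWver.and_mem α β h
          exact ⟨Or.inr ha, Or.inr hb⟩
      · rintro α β (h | h)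
        · exact absurd h (by simp)
        · rcases hWver.or_mem α β h with h' | h'
          · exact Or.inl (Or.inr h')
          · exact Or.inr (Or.inr h')
      · rintro y α (h | h)
        · exact absurd h (by simp)
        · obtain ⟨c, hc⟩ := hWver.ex_mem y α h
          exact ⟨c, Or.inr hc⟩
      · rintro y c α (h | h) a hac
        · obtain ⟨rfl, ht, rfl⟩ := SForm.ball.inj h
          obtain rfl : c = b := by
            have := STerm.param.inj ht
            exact this
          exact Or.inr (Set.mem_iUnion.2 ⟨⟨a, hac⟩, hVmem ⟨a, hac⟩⟩)
        · exact Or.inr (hWver.ball_mem y c α h a hac)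
      · rintro a b (h | h)
        · exact absurd h (by simp)
        · exact hWver.mem_true a b h
      · rintro a b (h | h)
        · exact absurd h (by simp)
        · exact hWver.nmem_true a b h
      · rintro a b (h | h)
        · exact absurd h (by simp)
        · exact hWver.eq_true a b h
      · rintro a b (h | h)
        · exact absurd h (by simp)
        · exact hWver.ne_true a b h
  · -- atomics
    intro a b
    have atomVer : ∀ θ : SForm,
        (∀ a' b' : ZFSet, θ = SForm.mem (.param a') (.param b') → a' ∈ b') →
        (∀ a' b' : ZFSet, θ = SForm.nmem (.param a') (.param b') → a' ∉ b') →
        (∀ a' b' : ZFSet, θ = SForm.eq (.param a') (.param b') → a' = b') →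
        (∀ a' b' : ZFSet, θ = SForm.ne (.param a') (.param b') → a' ≠ b') →
        (∀ α β : SForm, θ ≠ SForm.and α β) →
        (∀ α β : SForm, θ ≠ SForm.or α β) →
        (∀ (y : ℕ) (α : SForm), θ ≠ SForm.ex y α) →
        (∀ (y : ℕ) (t : STerm) (α : SForm), θ ≠ SForm.ball y t α) →
        IsVerification {θ} := by
      intro θ hm hn he hne hand hor hex hball
      constructor
      · rintro α β h; exact absurd (Set.mem_singleton_iff.1 h).symm (hand α β)
      · rintro α β h; exact absurd (Set.mem_singleton_iff.1 h).symm (hor α β)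
      · rintro y α h; exact absurd (Set.mem_singleton_iff.1 h).symm (hex y α)
      · rintro y c α h
        exact absurd (Set.mem_singleton_iff.1 h).symm (hball y (.param c) α)
      · rintro a' b' h; exact hm a' b' (Set.mem_singleton_iff.1 h).symm
      · rintro a' b' h; exact hn a' b' (Set.mem_singleton_iff.1 h).symm
      · rintro a' b' h; exact he a' b' (Set.mem_singleton_iff.1 h).symm
      · rintro a' b' h; exact hne a' b' (Set.mem_singleton_iff.1 h).symm
    refine ⟨⟨?_, ?_⟩, ⟨?_, ?_⟩, ⟨?_, ?_⟩, ⟨?_, ?_⟩⟩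
    · rintro ⟨V, hV, hm⟩; exact hV.mem_true a b hm
    · intro hab
      refine ⟨{SForm.mem (.param a) (.param b)},
        atomVer (SForm.mem (.param a) (.param b)) ?_ ?_ ?_ ?_ ?_ ?_ ?_ ?_, rfl⟩ <;> intros <;>
        (first
          | (rename_i h; exact SForm.noConfusion h)
          | (intro h; exact SForm.noConfusion h)
          | (rename_i h; injection h with h1 h2; injection h1 with h1;
             injection h2 with h2; subst h1; subst h2; exact hab))
    · rintro ⟨V, hV, hm⟩; exact hV.nmem_true a b hm
    · intro hab
      refine ⟨{SForm.nmem (.param a) (.param b)},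
        atomVer (SForm.nmem (.param a) (.param b)) ?_ ?_ ?_ ?_ ?_ ?_ ?_ ?_, rfl⟩ <;> intros <;>
        (first
          | (rename_i h; exact SForm.noConfusion h)
          | (intro h; exact SForm.noConfusion h)
          | (rename_i h; injection h with h1 h2; injection h1 with h1;
             injection h2 with h2; subst h1; subst h2; exact hab))
    · rintro ⟨V, hV, hm⟩; exact hV.eq_true a b hm
    · intro hab
      refine ⟨{SForm.eq (.param a) (.param b)},
        atomVer (SForm.eq (.param a) (.param b)) ?_ ?_ ?_ ?_ ?_ ?_ ?_ ?_, rfl⟩ <;> intros <;>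
        (first
          | (rename_i h; exact SForm.noConfusion h)
          | (intro h; exact SForm.noConfusion h)
          | (rename_i h; injection h with h1 h2; injection h1 with h1;
             injection h2 with h2; subst h1; subst h2; exact hab))
    · rintro ⟨V, hV, hm⟩; exact hV.ne_true a b hm
    · intro hab
      refine ⟨{SForm.ne (.param a) (.param b)},
        atomVer (SForm.ne (.param a) (.param b)) ?_ ?_ ?_ ?_ ?_ ?_ ?_ ?_, rfl⟩ <;> intros <;>
        (first
          | (rename_i h; exact SForm.noConfusion h)
          | (intro h; exact SForm.noConfusion h)
          | (rename_i h; injection h with h1 h2; injection h1 with h1;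
             injection h2 with h2; subst h1; subst h2; exact hab))

end Positivistic
end

section
/- Let τ be a positivistic theory (a collection of Σ conditionals). If φ₁, …, φₙ are I(L_{∞ω}) sentences each assertible from τ, and the sequent φ₁, …, φₙ ⊢ ψ is derivable in the infinitary intuitionistic sequent calculus LI_{∞ω} for some I(L_{∞ω}) sentence ψ, then ψ is assertible from τ. -/
namespace Infinitary

/-!
Core development: infinitary formulas over the vocabulary `=, ≠, ∈, ∉` with
parameters from the universe of sets, comprising both the Σ(L_{∞ω}) formulas
(set-indexed ⋀ and ⋁, bounded ∀, unbounded ∃) and the I(L_{∞ω}) formulas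
(set-indexed ⋀ and ⋁, unbounded ∃ and ∀, implication); the truth predicate 𝕋
for Σ(L_{∞ω}) sentences; the intuitionistic infinitary sequent calculus
LI_{∞ω} of Figure 5; and the assertibility predicate.
-/

/-- Terms: variables and parameter symbols naming sets. -/
inductive LTm : Type 1
  | var : ℕ → LTm
  | param : ZFSet → LTm

/-- Infinitary formulas.  `conj I f` denotes ⋀_{a ∈ I} f a and `disj I f`
denotes ⋁_{a ∈ I} f a. -/
inductive LForm : Type 1
  | tru : LForm
  | fls : LForm
  | eq : LTm → LTm → LForm
  | ne : LTm → LTm → LForm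
  | mem : LTm → LTm → LForm
  | nmem : LTm → LTm → LForm
  | conj : ZFSet → (ZFSet → LForm) → LForm
  | disj : ZFSet → (ZFSet → LForm) → LForm
  | ball : ℕ → LTm → LForm → LForm
  | ex : ℕ → LForm → LForm
  | all : ℕ → LForm → LForm
  | imp : LForm → LForm → LForm

/-- Σ(L_{∞ω}) formulas: built from atomic formulas and ⊤, ⊥ using set-indexed
conjunction and disjunction, bounded universal quantification, and unbounded
existential quantification. -/
def IsSigma : LForm → Prop
  | .conj I f => ∀ a : ZFSet, a ∈ I → IsSigma (f a)
  | .disj I f => ∀ a : ZFSet, a ∈ I → IsSigma (f a)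
  | .ball _ _ φ => IsSigma φ
  | .ex _ φ => IsSigma φ
  | .all _ _ => False
  | .imp _ _ => False
  | _ => True

/-- I(L_{∞ω}) formulas: built from atomic formulas and ⊤, ⊥ using set-indexed
conjunction and disjunction, unbounded existential and universal
quantification, and implication. -/
def IsI : LForm → Prop
  | .conj I f => ∀ a : ZFSet, a ∈ I → IsI (f a)
  | .disj I f => ∀ a : ZFSet, a ∈ I → IsI (f a)
  | .ball _ _ _ => False
  | .ex _ φ => IsI φ
  | .all _ φ => IsI φ
  | .imp φ ψ => IsI φ ∧ IsI ψ
  | _ => True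

/-- Finitary (L_{ωω}) formulas: all conjunctions and disjunctions are over
finite index sets. -/
def IsFinitary : LForm → Prop
  | .conj I f => I.toSet.Finite ∧ ∀ a : ZFSet, a ∈ I → IsFinitary (f a)
  | .disj I f => I.toSet.Finite ∧ ∀ a : ZFSet, a ∈ I → IsFinitary (f a)
  | .ball _ _ φ => IsFinitary φ
  | .ex _ φ => IsFinitary φ
  | .all _ φ => IsFinitary φ
  | .imp φ ψ => IsFinitary φ ∧ IsFinitary ψ
  | _ => True

/-- The free variables of a formula. -/
def free : LForm → Set ℕ
  | .tru => ∅
  | .fls => ∅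
  | .eq s t => {n | s = .var n ∨ t = .var n}
  | .ne s t => {n | s = .var n ∨ t = .var n}
  | .mem s t => {n | s = .var n ∨ t = .var n}
  | .nmem s t => {n | s = .var n ∨ t = .var n}
  | .conj I f => {n | ∃ a : ZFSet, a ∈ I ∧ n ∈ free (f a)}
  | .disj I f => {n | ∃ a : ZFSet, a ∈ I ∧ n ∈ free (f a)}
  | .ball x t φ => {n | t = .var n} ∪ (free φ \ {x})
  | .ex x φ => free φ \ {x}
  | .all x φ => free φ \ {x}
  | .imp φ ψ => free φ ∪ free ψ

/-- A sentence: no free variables. -/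
def IsSentence (φ : LForm) : Prop := free φ = ∅

/-- Substitution of a term for a variable in a term. -/
def tsubst (x : ℕ) (u : LTm) : LTm → LTm
  | .var n => if n = x then u else .var n
  | .param a => .param a

/-- Substitution of a term for the free occurrences of a variable. -/
def subst (x : ℕ) (u : LTm) : LForm → LForm
  | .tru => .tru
  | .fls => .fls
  | .eq s t => .eq (tsubst x u s) (tsubst x u t)
  | .ne s t => .ne (tsubst x u s) (tsubst x u t)
  | .mem s t => .mem (tsubst x u s) (tsubst x u t)
  | .nmem s t => .nmem (tsubst x u s) (tsubst x u t)
  | .conj I f => .conj I (fun a => subst x u (f a))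
  | .disj I f => .disj I (fun a => subst x u (f a))
  | .ball y t φ => .ball y (tsubst x u t) (if y = x then φ else subst x u φ)
  | .ex y φ => .ex y (if y = x then φ else subst x u φ)
  | .all y φ => .all y (if y = x then φ else subst x u φ)
  | .imp φ ψ => .imp (subst x u φ) (subst x u ψ)

/-- A verification: a set of Σ(L_{∞ω}) sentences with parameters closed under
the canonical decomposition clauses, whose atomic members are true. -/
structure IsVerification (V : Set LForm) : Prop where
  conj_mem : ∀ (I : ZFSet) (f : ZFSet → LForm), LForm.conj I f ∈ V →
    ∀ a : ZFSet, a ∈ I → f a ∈ V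
  disj_mem : ∀ (I : ZFSet) (f : ZFSet → LForm), LForm.disj I f ∈ V →
    ∃ a : ZFSet, a ∈ I ∧ f a ∈ V
  ex_mem : ∀ (x : ℕ) (φ : LForm), LForm.ex x φ ∈ V →
    ∃ a : ZFSet, subst x (.param a) φ ∈ V
  ball_mem : ∀ (x : ℕ) (b : ZFSet) (φ : LForm), LForm.ball x (.param b) φ ∈ V →
    ∀ a : ZFSet, a ∈ b → subst x (.param a) φ ∈ V
  mem_true : ∀ a b : ZFSet, LForm.mem (.param a) (.param b) ∈ V → a ∈ b
  nmem_true : ∀ a b : ZFSet, LForm.nmem (.param a) (.param b) ∈ V → a ∉ b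
  eq_true : ∀ a b : ZFSet, LForm.eq (.param a) (.param b) ∈ V → a = b
  ne_true : ∀ a b : ZFSet, LForm.ne (.param a) (.param b) ∈ V → a ≠ b

/-- The truth predicate 𝕋 for Σ(L_{∞ω}) sentences with parameters. -/
def LTrue (φ : LForm) : Prop := ∃ V : Set LForm, IsVerification V ∧ φ ∈ V

/-- The variable w is fresh for every formula of the list. -/
def FreshFor (w : ℕ) (Γ : List LForm) : Prop := ∀ φ ∈ Γ, w ∉ free φ

/-- The variable w is fresh for the succedent. -/
def FreshForO (w : ℕ) : Option LForm → Prop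
  | none => True
  | some φ => w ∉ free φ

/-- The intuitionistic infinitary sequent calculus LI_{∞ω} of Figure 5:
sequents Γ ⊢ Δ with Γ a finite list and Δ a singleton or empty; derivations
are well-founded trees. -/
inductive LIDer : List LForm → Option LForm → Prop
  | botL : LIDer [.fls] none
  | topR : LIDer [] (some .tru)
  | impL {Γ Γ' : List LForm} {Δ : Option LForm} {φ ψ : LForm} :
      LIDer Γ (some φ) → LIDer (ψ :: Γ') Δ → LIDer (.imp φ ψ :: (Γ ++ Γ')) Δ
  | impR {Γ : List LForm} {φ ψ : LForm} :
      LIDer (φ :: Γ) (some ψ) → LIDer Γ (some (.imp φ ψ))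
  | conjL {Γ : List LForm} {Δ : Option LForm} {I : ZFSet} {f : ZFSet → LForm}
      (a : ZFSet) : a ∈ I → LIDer (f a :: Γ) Δ → LIDer (.conj I f :: Γ) Δ
  | conjR {Γ : List LForm} {I : ZFSet} {f : ZFSet → LForm} :
      (∀ a : ZFSet, a ∈ I → LIDer Γ (some (f a))) → LIDer Γ (some (.conj I f))
  | disjL {Γ : List LForm} {Δ : Option LForm} {I : ZFSet} {f : ZFSet → LForm} :
      (∀ a : ZFSet, a ∈ I → LIDer (f a :: Γ) Δ) → LIDer (.disj I f :: Γ) Δ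
  | disjR {Γ : List LForm} {I : ZFSet} {f : ZFSet → LForm} (a : ZFSet) :
      a ∈ I → LIDer Γ (some (f a)) → LIDer Γ (some (.disj I f))
  | allL {Γ : List LForm} {Δ : Option LForm} {x : ℕ} {φ : LForm} (t : LTm) :
      LIDer (subst x t φ :: Γ) Δ → LIDer (.all x φ :: Γ) Δ
  | allR {Γ : List LForm} {x : ℕ} {φ : LForm} (w : ℕ) :
      FreshFor w Γ → w ∉ free (LForm.all x φ) →
      LIDer Γ (some (subst x (.var w) φ)) → LIDer Γ (some (.all x φ))
  | exL {Γ : List LForm} {Δ : Option LForm} {x : ℕ} {φ : LForm} (w : ℕ) :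
      FreshFor w Γ → FreshForO w Δ → w ∉ free (LForm.ex x φ) →
      LIDer (subst x (.var w) φ :: Γ) Δ → LIDer (.ex x φ :: Γ) Δ
  | exR {Γ : List LForm} {x : ℕ} {φ : LForm} (t : LTm) :
      LIDer Γ (some (subst x t φ)) → LIDer Γ (some (.ex x φ))
  | weakL {Γ : List LForm} {Δ : Option LForm} (φ : LForm) :
      LIDer Γ Δ → LIDer (φ :: Γ) Δ
  | weakR {Γ : List LForm} (φ : LForm) : LIDer Γ none → LIDer Γ (some φ)
  | struct {Γ Γ' : List LForm} {Δ : Option LForm} :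
      (∀ φ : LForm, φ ∈ Γ ↔ φ ∈ Γ') → LIDer Γ Δ → LIDer Γ' Δ
  | cut {Γ Γ' : List LForm} {Δ : Option LForm} {φ : LForm} :
      LIDer Γ (some φ) → LIDer (φ :: Γ') Δ → LIDer (Γ ++ Γ') Δ

/-- Iterated universal closure: `closen n φ = ∀x₀ ⋯ ∀x_{n-1} φ`. -/
def closen : ℕ → LForm → LForm
  | 0, φ => φ
  | n + 1, φ => closen n (.all n φ)

/-- χ is the universal closure of the conditional c. -/
def IsClosureOf (χ : LForm) (c : LForm × LForm) : Prop :=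
  ∃ n : ℕ, free (LForm.imp c.1 c.2) ⊆ {k | k < n} ∧ χ = closen n (.imp c.1 c.2)

/-- A_τ(φ): the I(L_{∞ω}) sentence φ is assertible from the positivistic
theory τ: there are a set A of axioms of τ and a set E of true Σ(L_{∞ω})
sentences such that ⋀Ā, ⋀E ⊢ φ is derivable in LI_{∞ω}, where Ā is the set
of universal closures of the conditionals in A. -/
def Assertible (τ : Set (LForm × LForm)) (φ : LForm) : Prop :=
  ∃ (IA : ZFSet) (gA : ZFSet → LForm) (IE : ZFSet) (gE : ZFSet → LForm),
    (∀ a : ZFSet, a ∈ IA → ∃ c ∈ τ, IsClosureOf (gA a) c) ∧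
    (∀ a : ZFSet, a ∈ IE → IsSigma (gE a) ∧ IsSentence (gE a) ∧ LTrue (gE a)) ∧
    LIDer [.conj IA gA, .conj IE gE] (some φ)

end Infinitary

namespace Infinitary

/-!
Finitely many assertibility witnesses can be merged into one: the index sets of the
conjunctions of axioms (resp. of true Σ sentences) are combined into a tagged disjoint
union. The calculus has no identity axiom, so the merged conjunctions cannot be cut in
against the old ones; instead, an induction on derivations shows that a conjunction in the
antecedent may be replaced by one with more conjuncts, as long as no new free variables
appear (this keeps the eigenvariable conditions intact). With a common antecedent for all
the φᵢ, the φᵢ are cut away from φ₁, …, φₙ ⊢ ψ.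
-/

universe u

lemma LIDer.weaken {Γ Γ' : List LForm} {Δ : Option LForm} (h : LIDer Γ Δ) (hsub : Γ ⊆ Γ') :
    LIDer Γ' Δ := by
  have hprefix : ∀ L : List LForm, LIDer (L ++ Γ) Δ := by
    intro L
    induction L with
    | nil => exact h
    | cons χ L ih => exact LIDer.weakL χ ih
  refine LIDer.struct (fun χ => ?_) (hprefix Γ')
  rw [List.mem_append]
  exact ⟨fun h => h.elim id (@hsub χ), Or.inl⟩

lemma LIDer.cut_of_forall {Γ : List LForm} {Δ : Option LForm} :
    ∀ {L : List LForm}, (∀ φ ∈ L, LIDer Γ (some φ)) → LIDer (L ++ Γ) Δ → LIDer Γ Δ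
  | [], _, h => h
  | φ :: L, hL, h => by
    have hcut : LIDer (Γ ++ (L ++ Γ)) Δ := LIDer.cut (hL φ List.mem_cons_self) h
    refine cut_of_forall (fun φ' hφ' => hL φ' (List.mem_cons_of_mem _ hφ')) ?_
    refine LIDer.struct (fun χ => ?_) hcut
    simp only [List.mem_append]
    tauto

def Widens (χ χ' : LForm) : Prop :=
  χ' = χ ∨ ∃ I f J g, χ = .conj I f ∧ χ' = .conj J g ∧
    (∀ a ∈ I, ∃ b ∈ J, g b = f a) ∧ free χ' ⊆ free χ

namespace Widens

lemma refl (χ : LForm) : Widens χ χ := Or.inl rfl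

lemma free_subset {χ χ' : LForm} (h : Widens χ χ') : free χ' ⊆ free χ := by
  rcases h with rfl | ⟨-, -, -, -, -, -, -, hfree⟩
  · exact subset_rfl
  · exact hfree

lemma eq_of_ne_conj {χ χ' : LForm} (h : Widens χ χ') (hχ : ∀ I f, χ ≠ .conj I f) :
    χ' = χ := by
  rcases h with rfl | ⟨I, f, -, -, hconj, -⟩
  · rfl
  · exact absurd hconj (hχ I f)

lemma exists_of_conj {I : ZFSet} {f : ZFSet → LForm} {χ' : LForm} (h : Widens (.conj I f) χ') :
    ∃ J g, χ' = .conj J g ∧ ∀ a ∈ I, ∃ b ∈ J, g b = f a := by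
  rcases h with rfl | ⟨I, f, J, g, hconj, rfl, hemb, -⟩
  · exact ⟨I, f, rfl, fun a ha => ⟨a, ha, rfl⟩⟩
  · cases hconj
    exact ⟨J, g, rfl, hemb⟩

lemma conj_of_sentences {I J : ZFSet} {f g : ZFSet → LForm}
    (hemb : ∀ a ∈ I, ∃ b ∈ J, g b = f a) (hs : ∀ b ∈ J, free (g b) = ∅) :
    Widens (.conj I f) (.conj J g) := by
  refine Or.inr ⟨I, f, J, g, rfl, rfl, hemb, ?_⟩
  rintro n ⟨b, hb, hn⟩
  rw [hs b hb] at hn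
  exact hn.elim

end Widens

def Widening (Γ Γ' : List LForm) : Prop :=
  (∀ χ ∈ Γ, ∃ χ' ∈ Γ', Widens χ χ') ∧ ∀ χ' ∈ Γ', ∃ χ ∈ Γ, Widens χ χ'

namespace Widening

variable {Γ Γ' : List LForm}

lemma cons_cons {χ χ' : LForm} (hχ : Widens χ χ') (h : Widening Γ Γ') :
    Widening (χ :: Γ) (χ' :: Γ') := by
  obtain ⟨hforth, hback⟩ := h
  refine ⟨?_, ?_⟩
  · rintro ψ (_ | ⟨_, hψ⟩)
    · exact ⟨χ', List.mem_cons_self, hχ⟩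
    · obtain ⟨ψ', hψ', hw⟩ := hforth ψ hψ
      exact ⟨ψ', List.mem_cons_of_mem _ hψ', hw⟩
  · rintro ψ' (_ | ⟨_, hψ'⟩)
    · exact ⟨χ, List.mem_cons_self, hχ⟩
    · obtain ⟨ψ, hψ, hw⟩ := hback ψ' hψ'
      exact ⟨ψ, List.mem_cons_of_mem _ hψ, hw⟩

lemma cons (h : Widening Γ Γ') (φ : LForm) : Widening (φ :: Γ) (φ :: Γ') :=
  cons_cons (Widens.refl φ) h

lemma of_mem_iff {Γ₀ : List LForm} (hmem : ∀ φ, φ ∈ Γ₀ ↔ φ ∈ Γ) (h : Widening Γ Γ') :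
    Widening Γ₀ Γ' := by
  simp only [Widening, hmem]
  exact h

lemma freshFor (h : Widening Γ Γ') {w : ℕ} (hw : FreshFor w Γ) : FreshFor w Γ' := by
  intro χ' hχ' hfree
  obtain ⟨χ, hχ, hwid⟩ := h.2 χ' hχ'
  exact hw χ hχ (hwid.free_subset hfree)

lemma exists_sublist (h : Widening Γ Γ') {Γ₁ : List LForm} (hsub : Γ₁ ⊆ Γ) :
    ∃ Γ₁', Γ₁' ⊆ Γ' ∧ Widening Γ₁ Γ₁' := by
  classical
  refine ⟨Γ'.filter fun χ' => ∃ χ ∈ Γ₁, Widens χ χ', List.filter_subset_self _, ?_, ?_⟩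
  · intro χ hχ
    obtain ⟨χ', hχ', hwid⟩ := h.1 χ (hsub hχ)
    exact ⟨χ', List.mem_filter.2 ⟨hχ', decide_eq_true ⟨χ, hχ, hwid⟩⟩, hwid⟩
  · intro χ' hχ'
    exact of_decide_eq_true (List.mem_filter.1 hχ').2

lemma exists_cons {χ : LForm} {Γ₁ : List LForm} (h : Widening (χ :: Γ₁) Γ') :
    ∃ χ' Γ₁', Widens χ χ' ∧ χ' :: Γ₁' ⊆ Γ' ∧ Widening Γ₁ Γ₁' := by
  obtain ⟨χ', hχ', hwid⟩ := h.1 χ List.mem_cons_self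
  obtain ⟨Γ₁', hsub, h₁⟩ := h.exists_sublist (List.subset_cons_self χ Γ₁)
  exact ⟨χ', Γ₁', hwid, List.cons_subset.2 ⟨hχ', hsub⟩, h₁⟩

lemma exists_cons_of_ne_conj {χ : LForm} {Γ₁ : List LForm} (h : Widening (χ :: Γ₁) Γ')
    (hχ : ∀ I f, χ ≠ .conj I f) : ∃ Γ₁', χ :: Γ₁' ⊆ Γ' ∧ Widening Γ₁ Γ₁' := by
  obtain ⟨χ', Γ₁', hwid, hsub, h₁⟩ := h.exists_cons
  rw [hwid.eq_of_ne_conj hχ] at hsub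
  exact ⟨Γ₁', hsub, h₁⟩

end Widening

theorem LIDer.of_widening {Γ : List LForm} {Δ : Option LForm} (h : LIDer Γ Δ) :
    ∀ {Γ'}, Widening Γ Γ' → LIDer Γ' Δ := by
  induction h with
  | botL =>
    intro Γ' hw
    obtain ⟨_, hsub, -⟩ := hw.exists_cons_of_ne_conj nofun
    exact LIDer.botL.weaken (List.cons_subset.2 ⟨hsub List.mem_cons_self, List.nil_subset _⟩)
  | topR => intro Γ' _; exact LIDer.topR.weaken (List.nil_subset _)
  | impL _ _ ih₁ ih₂ =>
    intro Γ' hw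
    obtain ⟨Γ₀', hsub, hw₀⟩ := hw.exists_cons_of_ne_conj nofun
    obtain ⟨Γ₁', hsub₁, hw₁⟩ := hw₀.exists_sublist (List.subset_append_left _ _)
    obtain ⟨Γ₂', hsub₂, hw₂⟩ := hw₀.exists_sublist (List.subset_append_right _ _)
    refine (LIDer.impL (ih₁ hw₁) (ih₂ (hw₂.cons _))).weaken ?_
    exact List.Subset.trans (List.cons_subset_cons _ (List.append_subset.2 ⟨hsub₁, hsub₂⟩)) hsub
  | impR _ ih => intro Γ' hw; exact LIDer.impR (ih (hw.cons _))
  | conjL a ha _ ih =>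
    intro Γ' hw
    obtain ⟨χ', Γ₁', hwid, hsub, hw₁⟩ := hw.exists_cons
    obtain ⟨J, g, rfl, hemb⟩ := hwid.exists_of_conj
    obtain ⟨b, hb, hgb⟩ := hemb a ha
    exact (LIDer.conjL b hb (hgb ▸ ih (hw₁.cons _))).weaken hsub
  | conjR _ ih => intro Γ' hw; exact LIDer.conjR fun a ha => ih a ha hw
  | disjL _ ih =>
    intro Γ' hw
    obtain ⟨Γ₁', hsub, hw₁⟩ := hw.exists_cons_of_ne_conj nofun
    exact (LIDer.disjL fun a ha => ih a ha (hw₁.cons _)).weaken hsub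
  | disjR a ha _ ih => intro Γ' hw; exact LIDer.disjR a ha (ih hw)
  | allL t _ ih =>
    intro Γ' hw
    obtain ⟨Γ₁', hsub, hw₁⟩ := hw.exists_cons_of_ne_conj nofun
    exact (LIDer.allL t (ih (hw₁.cons _))).weaken hsub
  | allR w hfresh hw_all _ ih =>
    intro Γ' hw
    exact LIDer.allR w (hw.freshFor hfresh) hw_all (ih hw)
  | exL w hfresh hfreshΔ hw_ex _ ih =>
    intro Γ' hw
    obtain ⟨Γ₁', hsub, hw₁⟩ := hw.exists_cons_of_ne_conj nofun
    exact (LIDer.exL w (hw₁.freshFor hfresh) hfreshΔ hw_ex (ih (hw₁.cons _))).weaken hsub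
  | exR t _ ih => intro Γ' hw; exact LIDer.exR t (ih hw)
  | weakL φ _ ih =>
    intro Γ' hw
    obtain ⟨χ', Γ₁', -, hsub, hw₁⟩ := hw.exists_cons
    exact (ih hw₁).weaken (List.Subset.trans (List.subset_cons_self χ' Γ₁') hsub)
  | weakR φ _ ih => intro Γ' hw; exact LIDer.weakR φ (ih hw)
  | struct hmem _ ih => intro Γ' hw; exact ih (hw.of_mem_iff hmem)
  | cut _ _ ih₁ ih₂ =>
    intro Γ' hw
    obtain ⟨Γ₁', hsub₁, hw₁⟩ := hw.exists_sublist (List.subset_append_left _ _)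
    obtain ⟨Γ₂', hsub₂, hw₂⟩ := hw.exists_sublist (List.subset_append_right _ _)
    exact (LIDer.cut (ih₁ hw₁) (ih₂ (hw₂.cons _))).weaken (List.append_subset.2 ⟨hsub₁, hsub₂⟩)

lemma LIDer.of_conj_pair_embedding {I₁ I₂ J₁ J₂ : ZFSet} {f₁ f₂ g₁ g₂ : ZFSet → LForm}
    {Δ : Option LForm} (h : LIDer [.conj I₁ f₁, .conj I₂ f₂] Δ)
    (hemb₁ : ∀ a ∈ I₁, ∃ b ∈ J₁, g₁ b = f₁ a) (hemb₂ : ∀ a ∈ I₂, ∃ b ∈ J₂, g₂ b = f₂ a)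
    (hs₁ : ∀ b ∈ J₁, free (g₁ b) = ∅) (hs₂ : ∀ b ∈ J₂, free (g₂ b) = ∅) :
    LIDer [.conj J₁ g₁, .conj J₂ g₂] Δ :=
  h.of_widening <| .cons_cons (.conj_of_sentences hemb₁ hs₁) <|
    .cons_cons (.conj_of_sentences hemb₂ hs₂) ⟨nofun, nofun⟩

/-- Two set-indexed families merge into one, indexed by the tagged union
`I₁ × {∅} ∪ I₂ × {{∅}}`. -/
lemma exists_family_merge {α : Type*} {P : α → Prop} {I₁ I₂ : ZFSet.{u}} {f₁ f₂ : ZFSet.{u} → α}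
    (h₁ : ∀ a ∈ I₁, P (f₁ a)) (h₂ : ∀ a ∈ I₂, P (f₂ a)) :
    ∃ (J : ZFSet.{u}) (g : ZFSet.{u} → α), (∀ b ∈ J, P (g b)) ∧
      (∀ a ∈ I₁, ∃ b ∈ J, g b = f₁ a) ∧ (∀ a ∈ I₂, ∃ b ∈ J, g b = f₂ a) := by
  classical
  set tag₁ : ZFSet.{u} → ZFSet.{u} := fun a => a.pair ∅
  set tag₂ : ZFSet.{u} → ZFSet.{u} := fun a => a.pair {∅}
  have htag₁ : Function.Injective tag₁ := fun a a' h => (ZFSet.pair_injective h).1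
  have htag₂ : Function.Injective tag₂ := fun a a' h => (ZFSet.pair_injective h).1
  have hdisj : ∀ a a', tag₂ a ≠ tag₁ a' := fun a a' h => by
    have hempty : (∅ : ZFSet.{u}) ∈ ({∅} : ZFSet.{u}) := ZFSet.mem_singleton.2 rfl
    rw [(ZFSet.pair_injective h).2] at hempty
    exact ZFSet.notMem_empty ∅ hempty
  set g : ZFSet.{u} → α := fun z =>
    if z ∈ Set.range tag₁ then f₁ (Function.invFun tag₁ z) else f₂ (Function.invFun tag₂ z)
  have hg₁ : ∀ a, g (tag₁ a) = f₁ a := fun a => by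
    simp only [g, Set.mem_range_self, if_true, Function.leftInverse_invFun htag₁ a]
  have hg₂ : ∀ a, g (tag₂ a) = f₂ a := fun a => by
    have : tag₂ a ∉ Set.range tag₁ := fun ⟨a', h⟩ => hdisj a a' h.symm
    simp only [g, this, if_false, Function.leftInverse_invFun htag₂ a]
  have hmem : ∀ z, z ∈ I₁.prod {∅} ∪ I₂.prod {{∅}} ↔
      (∃ a ∈ I₁, z = tag₁ a) ∨ ∃ a ∈ I₂, z = tag₂ a := by
    simp [ZFSet.mem_prod, tag₁, tag₂]
  refine ⟨I₁.prod {∅} ∪ I₂.prod {{∅}}, g, ?_, ?_, ?_⟩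
  · intro z hz
    rcases (hmem z).1 hz with ⟨a, ha, rfl⟩ | ⟨a, ha, rfl⟩
    · exact hg₁ a ▸ h₁ a ha
    · exact hg₂ a ▸ h₂ a ha
  · exact fun a ha => ⟨tag₁ a, (hmem _).2 (.inl ⟨a, ha, rfl⟩), hg₁ a⟩
  · exact fun a ha => ⟨tag₂ a, (hmem _).2 (.inr ⟨a, ha, rfl⟩), hg₂ a⟩

lemma free_closen_eq_empty : ∀ (n : ℕ) {φ : LForm}, free φ ⊆ {k | k < n} → free (closen n φ) = ∅
  | 0, _, h => Set.eq_empty_of_forall_notMem fun k hk => Nat.not_lt_zero k (h hk)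
  | n + 1, _, h => free_closen_eq_empty n fun _ ⟨hk, hkn⟩ =>
      Nat.lt_of_le_of_ne (Nat.le_of_lt_succ (h hk)) hkn

lemma IsClosureOf.free_eq_empty {χ : LForm} {c : LForm × LForm} (h : IsClosureOf χ c) :
    free χ = ∅ := by
  obtain ⟨n, hsub, rfl⟩ := h
  exact free_closen_eq_empty n hsub

lemma exists_common_assertion_context {τ : Set (LForm × LForm)} :
    ∀ {φs : List LForm}, (∀ φ ∈ φs, Assertible τ φ) →
      ∃ (IA : ZFSet) (gA : ZFSet → LForm) (IE : ZFSet) (gE : ZFSet → LForm),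
        (∀ a ∈ IA, ∃ c ∈ τ, IsClosureOf (gA a) c) ∧
        (∀ a ∈ IE, IsSigma (gE a) ∧ IsSentence (gE a) ∧ LTrue (gE a)) ∧
        ∀ φ ∈ φs, LIDer [.conj IA gA, .conj IE gE] (some φ)
  | [], _ => ⟨∅, fun _ => .tru, ∅, fun _ => .tru, fun a ha => (ZFSet.notMem_empty a ha).elim,
      fun a ha => (ZFSet.notMem_empty a ha).elim, nofun⟩
  | φ :: φs, h => by
    obtain ⟨IA, gA, IE, gE, hA, hE, hder⟩ :=
      exists_common_assertion_context fun ψ hψ => h ψ (List.mem_cons_of_mem φ hψ)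
    obtain ⟨IA', gA', IE', gE', hA', hE', hφ⟩ := h φ List.mem_cons_self
    obtain ⟨JA, g, hJA, hembA', hembA⟩ :=
      exists_family_merge (P := fun χ => ∃ c ∈ τ, IsClosureOf χ c) hA' hA
    obtain ⟨JE, g', hJE, hembE', hembE⟩ :=
      exists_family_merge (P := fun χ => IsSigma χ ∧ IsSentence χ ∧ LTrue χ) hE' hE
    have hsA : ∀ b ∈ JA, free (g b) = ∅ := fun b hb =>
      let ⟨_, _, hc⟩ := hJA b hb
      hc.free_eq_empty
    have hsE : ∀ b ∈ JE, free (g' b) = ∅ := fun b hb => (hJE b hb).2.1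
    refine ⟨JA, g, JE, g', hJA, hJE, ?_⟩
    rintro ψ (_ | ⟨_, hψ⟩)
    · exact hφ.of_conj_pair_embedding hembA' hembE' hsA hsE
    · exact (hder ψ hψ).of_conj_pair_embedding hembA hembE hsA hsE

theorem assertibility_closed_under_intuitionistic_derivation_general
    (τ : Set (LForm × LForm))
    (φs : List LForm)
    (hφs : ∀ φ ∈ φs, IsI φ ∧ IsSentence φ ∧ Assertible τ φ)
    (ψ : LForm)
    (hder : LIDer φs (some ψ)) :
    Assertible τ ψ := by
  obtain ⟨IA, gA, IE, gE, hA, hE, hφ⟩ :=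
    exists_common_assertion_context fun φ hφ => (hφs φ hφ).2.2
  have hder' : LIDer (φs ++ [.conj IA gA, .conj IE gE]) (some ψ) :=
    hder.weaken (List.subset_append_left _ _)
  exact ⟨IA, gA, IE, gE, hA, hE, LIDer.cut_of_forall hφ hder'⟩

/-- Let τ be a positivistic theory (a collection of conditionals
between finitary Σ formulas).  If φ₁, …, φₙ are I(L_{∞ω}) sentences, each
assertible from τ, and the sequent φ₁, …, φₙ ⊢ ψ is derivable in LI_{∞ω} for
an I(L_{∞ω}) sentence ψ, then ψ is assertible from τ. -/
theorem assertibility_closed_under_intuitionistic_derivation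
    (τ : Set (LForm × LForm))
    (hτ : ∀ c ∈ τ, IsSigma c.1 ∧ IsSigma c.2 ∧ IsFinitary c.1 ∧ IsFinitary c.2)
    (φs : List LForm)
    (hφs : ∀ φ ∈ φs, IsI φ ∧ IsSentence φ ∧ Assertible τ φ)
    (ψ : LForm) (hψI : IsI ψ) (hψs : IsSentence ψ)
    (hder : LIDer φs (some ψ)) :
    Assertible τ ψ :=
  assertibility_closed_under_intuitionistic_derivation_general τ φs hφs ψ hder

end Infinitary
end
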